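/- arXiv:2405.03931 — 2 statements merged into one kernel-verified Lean document; each statement's English description precedes it below -/
import Mathlib

section
/- Let R₀ > 1, v > 0, h ≥ 0, ω > 0, ψ ≥ 0 be reals, and set Σ = ψ+ω, Σ̄ = Σ+1, ℏ = h+1, r = R₀ − 1, ζ = Σ̄+v, η = Σ̄+h, ξ = Σ̄ + h(ψ+1), ρ = Σ̄(v + rh) + R₀hv. Define R_v = R₀·ζξ/(ζξ + vωη) and ω_cr = rℏΣ̄ζ/ρ. Then R_v < 1 if and only if ω > ω_cr. -/
theorem stmt_3 (R₀ v h ω ψ : ℝ) (hR : 1 < R₀) (hv : 0 < v) (hh : 0 ≤ h)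
    (hω : 0 < ω) (hψ : 0 ≤ ψ)
    (Sg Sb ℏ r ζ η ξ ρ Rv ωcr : ℝ)
    (hSg : Sg = ψ + ω) (hSb : Sb = Sg + 1) (hℏ : ℏ = h + 1) (hr : r = R₀ - 1)
    (hζ : ζ = Sb + v) (hη : η = Sb + h) (hξ : ξ = Sb + h * (ψ + 1))
    (hρ : ρ = Sb * (v + r * h) + R₀ * h * v)
    (hRv : Rv = R₀ * (ζ * ξ) / (ζ * ξ + v * ω * η))
    (hωcr : ωcr = r * ℏ * Sb * ζ / ρ) :
    Rv < 1 ↔ ω > ωcr := by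
  subst hSg hSb hℏ hr hζ hη hξ hρ hRv hωcr
  have hden : (0:ℝ) < (ψ + ω + 1 + v) * (ψ + ω + 1 + h * (ψ + 1)) +
      v * ω * (ψ + ω + 1 + h) := by positivity
  have hρpos : (0:ℝ) < (ψ + ω + 1) * (v + (R₀ - 1) * h) + R₀ * h * v := by
    have h1 : (0:ℝ) < v + (R₀ - 1) * h := by nlinarith
    have h2 : (0:ℝ) ≤ R₀ * h * v := by positivity
    nlinarith
  rw [div_lt_one hden, gt_iff_lt, div_lt_iff₀ hρpos]
  constructor <;> intro H <;> nlinarith [H]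
end

section
/- Let R₀ > 1, v > 0, h ≥ 0, Σ ≥ 0 and y with 0 < y < rℏ, where r = R₀−1, ℏ = h+1. Set Σ̄ = Σ+1, ζ = Σ̄+v, χ = ζ+y, ρ = Σ̄(v+rh)+R₀hv, and p = Σ̄(rℏ−y)/(ρ+R₀hy). Then the values S = 1/R₀ (i.e. s = 1), R = r/R₀, x = Σ̄⁻¹(Σ̄r + Σ̄p − R₀χp), and ω = χp satisfy the leading-order endemic equilibrium equations: R₀ − 1 − vp + hx − y = 0, y + vp − R₀R − hx = 0, and y − yp + (Σ−ω)R₀R − (Σ̄+h)x = 0. -/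
theorem stmt_17 (R₀ v h Sg y : ℝ) (hR : 1 < R₀) (hv : 0 < v) (hh : 0 ≤ h) (hSg : 0 ≤ Sg)
    (r ℏ : ℝ) (hr : r = R₀ - 1) (hℏ : ℏ = h + 1)
    (hy : 0 < y) (hy2 : y < r * ℏ)
    (Sb ζ χ ρ p S R x ω : ℝ)
    (hSb : Sb = Sg + 1) (hζ : ζ = Sb + v) (hχ : χ = ζ + y)
    (hρ : ρ = Sb * (v + r * h) + R₀ * h * v)
    (hp : p = Sb * (r * ℏ - y) / (ρ + R₀ * h * y))
    (hS : S = 1 / R₀) (hRfrac : R = r / R₀)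
    (hx : x = Sb⁻¹ * (Sb * r + Sb * p - R₀ * χ * p))
    (hω : ω = χ * p) :
    R₀ - 1 - v * p + h * x - y = 0 ∧
    y + v * p - R₀ * R - h * x = 0 ∧
    y - y * p + (Sg - ω) * (R₀ * R) - (Sb + h) * x = 0 := by
  have hr0 : 0 < r := by rw [hr]; linarith
  have hSb0 : 0 < Sb := by rw [hSb]; linarith
  have hden : 0 < ρ + R₀ * h * y := by
    rw [hρ]
    have : 0 < Sb * (v + r * h) := by positivity
    nlinarith [mul_nonneg (mul_nonneg (le_of_lt (by linarith : (0:ℝ) < R₀)) hh) hy.le]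
  have hdne : ρ + R₀ * h * y ≠ 0 := ne_of_gt hden
  have hR0 : R₀ ≠ 0 := by linarith
  subst hr hℏ hSb hζ hχ hρ hp hS hRfrac hx hω
  refine ⟨?_, ?_, ?_⟩ <;> field_simp <;> ring
end
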